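/- arXiv:1006.0367 — 2 statements merged into one kernel-verified Lean document; each statement's English description precedes it below -/
import Mathlib

section
/- The elements {p(A) : A an atomic set partition} freely generate NCSym as an algebra: the unique ℚ-algebra homomorphism from the free associative ℚ-algebra on the set of atomic set partitions to NCSym sending the generator indexed by A to p(A) is an algebra isomorphism. In particular, the p(A) for atomic A are algebraically independent. -/
open Finset

/-- `[n] = {1, …, n}` as a finset of naturals. -/
def seg (n : ℕ) : Finset ℕ := Finset.Icc 1 n

/-- A (raw) collection of blocks. -/
abbrev Blocks := Finset (Finset ℕ)

/-- The ground set (union of the blocks). -/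
def ground (A : Blocks) : Finset ℕ := A.sup id

/-- `A` is a set partition of the finite set `X`: nonempty pairwise disjoint blocks with union `X`. -/
def IsPartitionOf (A : Blocks) (X : Finset ℕ) : Prop :=
  (∀ B ∈ A, B.Nonempty) ∧ (A : Set (Finset ℕ)).PairwiseDisjoint id ∧ ground A = X

/-- `A` is a set partition of `[n]`. -/
def IsSP (A : Blocks) (n : ℕ) : Prop := IsPartitionOf A (seg n)

/-- The unique increasing bijection from `X` onto `[#X]`. -/
def stdFun (X : Finset ℕ) (x : ℕ) : ℕ := (X.filter (· < x)).card + 1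

/-- Standardization of a collection of blocks. -/
def stdP (A : Blocks) : Blocks := A.image fun B => B.image (stdFun (ground A))

/-- Shift all entries of all blocks up by `k`. -/
def shiftP (A : Blocks) (k : ℕ) : Blocks := A.image fun B => B.image (· + k)

/-- Concatenation `A | B` of set partitions: shift `B` up by the weight of `A`. -/
def concatP (A B : Blocks) : Blocks := A ∪ shiftP B (ground A).card

/-- The `i`-th block of `A` (1-based), where blocks are ordered by increasing minima. -/
def blockAt (A : Blocks) (i : ℕ) : Finset ℕ :=
  (A.filter fun B => (A.filter fun C => C.min ≤ B.min).card = i).sup id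

/-- `A_J` : the subcollection of blocks of `A` indexed by `J`. -/
def subColl (A : Blocks) (J : Finset ℕ) : Blocks := J.image (blockAt A)

/-- `A` is an atomic set partition of `[n]`. -/
def IsAtomicSP (A : Blocks) (n : ℕ) : Prop :=
  IsSP A n ∧ 1 ≤ n ∧
    ¬ ∃ m B C, 0 < m ∧ m < n ∧ IsSP B m ∧ IsSP C (n - m) ∧ A = concatP B C

/-- Raw set compositions: words whose letters are finsets of naturals. -/
abbrev SComp := List (Finset ℕ)

/-- The union of the letters of a word. -/
def sunion (γ : SComp) : Finset ℕ := γ.foldr (· ∪ ·) ∅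

/-- `γ` is a set composition of `K`. -/
def IsSCompOf (γ : SComp) (K : Finset ℕ) : Prop :=
  (∀ B ∈ γ, B.Nonempty) ∧ γ.Pairwise Disjoint ∧ sunion γ = K

/-- `γ[A] = std(A_{γ₁}) | std(A_{γ₂}) | ⋯ | std(A_{γₛ})`. -/
def applyComp (γ : SComp) (A : Blocks) : Blocks :=
  (γ.map fun g => stdP (subColl A g)).foldr concatP ∅

abbrev NCSym := Blocks →₀ ℚ

/-- The basis element of `NCSym` indexed by a set partition. -/
noncomputable def bas (A : Blocks) : NCSym := Finsupp.single A 1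

/-- `p(A) = ∑_{γ ∈ Γ'(r)} (-1)^{ℓ(γ)-1} γ[A]`. -/
noncomputable def pNC (A : Blocks) (r : ℕ) : NCSym :=
  ∑ᶠ γ ∈ {γ : SComp | IsSCompOf γ (seg r) ∧ 1 ∈ γ.headI},
    ((-1 : ℚ) ^ (γ.length - 1)) • bas (applyComp γ A)

open TensorProduct in
/-- `Δ(A) = ∑_{K ⊔ L = [r]} std(A_K) ⊗ std(A_L)` on a basis element. -/
noncomputable def deltaB (A : Blocks) : NCSym ⊗[ℚ] NCSym :=
  ∑ K ∈ (seg A.card).powerset,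
    bas (stdP (subColl A K)) ⊗ₜ[ℚ] bas (stdP (subColl A (seg A.card \ K)))

/-- The coproduct of `NCSym`, extended linearly. -/
noncomputable def Delta : NCSym →ₗ[ℚ] TensorProduct ℚ NCSym NCSym :=
  Finsupp.lsum ℚ fun A => LinearMap.toSpanSingleton ℚ _ (deltaB A)

lemma ground_shiftP (A : Blocks) (k : ℕ) : ground (shiftP A k) = (ground A).image (· + k) := by
  ext x
  simp [ground, shiftP, Finset.mem_sup, Finset.mem_image]
  aesop

lemma image_Icc_add (n m : ℕ) : (Finset.Icc 1 n).image (· + m) = Finset.Icc (m+1) (m+n) := by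
  ext x
  simp only [Finset.mem_image, Finset.mem_Icc]
  constructor
  · rintro ⟨y, hy, rfl⟩; omega
  · intro h; exact ⟨x - m, by omega, by omega⟩

lemma Icc_union_Icc (m n : ℕ) : Finset.Icc 1 m ∪ Finset.Icc (m+1) (m+n) = Finset.Icc 1 (m+n) := by
  ext x; simp only [Finset.mem_union, Finset.mem_Icc]; omega

lemma shiftP_shiftP (A : Blocks) (k l : ℕ) : shiftP (shiftP A k) l = shiftP A (k + l) := by
  ext B
  simp only [shiftP, Finset.mem_image]
  constructor
  · rintro ⟨C, ⟨D, hD, rfl⟩, rfl⟩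
    exact ⟨D, hD, by rw [Finset.image_image]; congr 1; funext x; simp; omega⟩
  · rintro ⟨D, hD, rfl⟩
    exact ⟨D.image (· + k), ⟨D, hD, rfl⟩, by rw [Finset.image_image]; congr 1; funext x; simp; omega⟩

lemma shiftP_union (A B : Blocks) (k : ℕ) : shiftP (A ∪ B) k = shiftP A k ∪ shiftP B k :=
  Finset.image_union _ _

lemma ground_card_of_isSP {A : Blocks} {n : ℕ} (h : IsSP A n) : (ground A).card = n := by
  rw [h.2.2]; simp [seg]

lemma block_subset_ground {A : Blocks} {X : Finset ℕ} (h : X ∈ A) : X ⊆ ground A :=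
  Finset.le_sup (f := id) h

/-- The concatenation of set partitions of `[m]` and `[n]` is a set partition of `[m+n]`. -/
lemma isSP_concat {A B : Blocks} {m n : ℕ} (hA : IsSP A m) (hB : IsSP B n) :
    IsSP (concatP A B) (m + n) := by
  obtain ⟨hAne, hAdisj, hAgr⟩ := hA
  obtain ⟨hBne, hBdisj, hBgr⟩ := hB
  have hm : (ground A).card = m := by rw [hAgr]; simp [seg]
  have hshift : ground (shiftP B (ground A).card) = Finset.Icc (m+1) (m+n) := by
    rw [ground_shiftP, hBgr, hm]; exact image_Icc_add n m
  have hsubA : ∀ X ∈ A, X ⊆ Finset.Icc 1 m := by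
    intro X hX
    have h := block_subset_ground hX
    rw [hAgr] at h
    simpa [seg] using h
  have hsubB : ∀ X ∈ shiftP B (ground A).card, X ⊆ Finset.Icc (m+1) (m+n) := by
    intro X hX; rw [← hshift]; exact block_subset_ground hX
  have hinj : Function.Injective (· + (ground A).card) := add_left_injective _
  refine ⟨?_, ?_, ?_⟩
  · intro X hX
    rcases Finset.mem_union.mp hX with h | h
    · exact hAne X h
    · rcases Finset.mem_image.mp h with ⟨Y, hY, rfl⟩
      exact (hBne Y hY).image _
  · intro X hX Y hY hXY
    simp only [Finset.coe_union, Set.mem_union, Finset.mem_coe, concatP] at hX hY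
    have mixed : ∀ U V : Finset ℕ, U ⊆ Finset.Icc 1 m → V ⊆ Finset.Icc (m+1) (m+n) →
        Disjoint (id U) (id V) := by
      intro U V hU hV
      simp only [id]
      rw [Finset.disjoint_left]
      intro a haU haV
      have h1 := Finset.mem_Icc.mp (hU haU)
      have h2 := Finset.mem_Icc.mp (hV haV)
      omega
    rcases hX with hX | hX <;> rcases hY with hY | hY
    · exact hAdisj hX hY hXY
    · exact mixed X Y (hsubA X hX) (hsubB Y hY)
    · exact (mixed Y X (hsubA Y hY) (hsubB X hX)).symm
    · rcases Finset.mem_image.mp hX with ⟨X', hX', rfl⟩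
      rcases Finset.mem_image.mp hY with ⟨Y', hY', rfl⟩
      have hne : X' ≠ Y' := by rintro rfl; exact hXY rfl
      have hd : Disjoint X' Y' := hBdisj (Finset.mem_coe.mpr hX') (Finset.mem_coe.mpr hY') hne
      exact (Finset.disjoint_image hinj).mpr hd
  · show ground (A ∪ shiftP B (ground A).card) = seg (m + n)
    rw [ground, Finset.sup_union, ← ground, ← ground, hshift, hAgr]
    show seg m ∪ _ = seg (m+n)
    simpa [seg] using Icc_union_Icc m n

/-- `A` is a set partition of `[n]` for some `n`. -/
def IsSPart (A : Blocks) : Prop := ∃ n, IsSP A n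

lemma isSPart_concat {A B : Blocks} (hA : IsSPart A) (hB : IsSPart B) :
    IsSPart (concatP A B) := by
  obtain ⟨m, hA⟩ := hA
  obtain ⟨n, hB⟩ := hB
  exact ⟨m + n, isSP_concat hA hB⟩

lemma isSPart_empty : IsSPart (∅ : Blocks) := by
  refine ⟨0, ?_, ?_, ?_⟩ <;> simp [ground, seg]

/-- The type of set partitions of the sets `[n]`, `n ≥ 0`. -/
def SP : Type := {A : Blocks // IsSPart A}

/-- The monoid of set partitions under the concatenation product `A ⋅ B = A|B`,
with unit the empty set partition. -/
instance : Monoid SP where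
  mul a b := ⟨concatP a.1 b.1, isSPart_concat a.2 b.2⟩
  one := ⟨∅, isSPart_empty⟩
  mul_assoc a b c := by
    refine Subtype.ext ?_
    show concatP (concatP a.1 b.1) c.1 = concatP a.1 (concatP b.1 c.1)
    obtain ⟨m, hA⟩ := a.2
    obtain ⟨n, hB⟩ := b.2
    obtain ⟨p, hC⟩ := c.2
    have hm : (ground a.1).card = m := ground_card_of_isSP hA
    have hn : (ground b.1).card = n := ground_card_of_isSP hB
    have hmn : (ground (concatP a.1 b.1)).card = m + n := ground_card_of_isSP (isSP_concat hA hB)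
    simp only [concatP] at hmn ⊢
    rw [hm] at hmn ⊢
    rw [hn, hmn, shiftP_union, shiftP_shiftP, Finset.union_assoc, Nat.add_comm n m]
  one_mul a := by
    refine Subtype.ext ?_
    show concatP ∅ a.1 = a.1
    have h0 : (ground (∅ : Blocks)).card = 0 := by simp [ground]
    rw [concatP, h0]
    have h1 : shiftP a.1 0 = a.1 := by
      have himg : ∀ B : Finset ℕ, B.image (· + 0) = B := by intro B; simp
      simp [shiftP, himg]
    rw [h1]; exact Finset.empty_union _
  mul_one a := by
    refine Subtype.ext ?_
    show concatP a.1 ∅ = a.1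
    simp [concatP, shiftP]

/-- `NCSym` as the monoid algebra on the monoid of set partitions. -/
abbrev NCSym2 := MonoidAlgebra ℚ SP

open scoped Classical in
/-- The basis element of `NCSym` indexed by a set partition (junk value `0` otherwise). -/
noncomputable def basSP (A : Blocks) : NCSym2 :=
  if h : IsSPart A then MonoidAlgebra.single (⟨A, h⟩ : SP) 1 else 0

/-- `p(A) = ∑_{γ ∈ Γ'(r)} (-1)^{ℓ(γ)-1} γ[A]`, where `r = ℓ(A)`. -/
noncomputable def pSP (A : SP) : NCSym2 :=
  ∑ᶠ γ ∈ {γ : SComp | IsSCompOf γ (seg A.1.card) ∧ 1 ∈ γ.headI},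
    ((-1 : ℚ) ^ (γ.length - 1)) • basSP (applyComp γ A.1)

/-- The type of atomic set partitions. -/
def AtomicSP : Type := {A : SP // ∃ n, IsAtomicSP A.1 n}

/-!
Under concatenation, set partitions form a free monoid on the atomic ones: cutting a partition at
every point `m` that no block straddles gives its unique factorization into atomic pieces. So
`NCSym` is the free algebra on the basis elements of atomic partitions, and it suffices to compare
the basis `A₁ | ⋯ | Aₖ` with the products `p(A₁) ⋯ p(Aₖ)`. For atomic `A`, the term of `p(A)` at
`γ = ([r])` is `A` itself, and every other `γ[A]` is a concatenation of `ℓ(γ) ≥ 2` nonempty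
partitions of the same size as `A`, so it has at least two atomic factors. Hence the products are
unitriangular with respect to the basis ordered by size minus number of atomic factors, and a
unitriangular change of basis is invertible.
-/

namespace Module.Basis

open Submodule

variable {ι κ R V W : Type*} [Ring R] [AddCommGroup V] [Module R V] [AddCommGroup W] [Module R W]
  [LinearOrder κ] (b : Basis ι R V) (c : Basis ι R W) (f : V →ₗ[R] W) (h : ι → κ)

theorem injective_of_unitriangular
    (hf : ∀ i, f (b i) - c i ∈ span R (c '' {j | h j < h i})) : Function.Injective f := by
  classical
  rw [injective_iff_map_eq_zero]
  intro x hx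
  by_contra hx0
  obtain ⟨i₀, hi₀, hmax⟩ :=
    (b.repr x).support.exists_max_image h (by simpa using hx0)
  have hcoeff : ∀ i ∈ (b.repr x).support, c.repr (f (b i)) i₀ = if i = i₀ then 1 else 0 := by
    intro i hi
    have herr : c.repr (f (b i) - c i) i₀ = 0 := by
      by_contra hne
      exact (hmax i hi).not_gt (c.mem_span_image.mp (hf i) (Finsupp.mem_support_iff.mpr hne))
    rw [map_sub, Finsupp.sub_apply, sub_eq_zero] at herr
    rw [herr, c.repr_self, Finsupp.single_apply, eq_comm]
  have : c.repr (f x) i₀ = b.repr x i₀ := by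
    conv_lhs => rw [← b.linearCombination_repr x]
    simp only [Finsupp.linearCombination_apply, Finsupp.sum, map_sum, map_smul,
      Finsupp.finsetSum_apply, Finsupp.smul_apply, smul_eq_mul]
    rw [Finset.sum_congr rfl fun i hi => by rw [hcoeff i hi]]
    simp [hi₀]
  exact Finsupp.mem_support_iff.mp hi₀ (by rw [← this, hx, map_zero, Finsupp.zero_apply])

theorem surjective_of_unitriangular [WellFoundedLT κ]
    (hf : ∀ i, f (b i) - c i ∈ span R (c '' {j | h j < h i})) : Function.Surjective f := by
  have hc : ∀ i, c i ∈ LinearMap.range f := by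
    intro i
    induction i using (InvImage.wf h wellFounded_lt).induction with
    | _ i ih =>
      have herr : f (b i) - c i ∈ LinearMap.range f :=
        span_le.mpr (by rintro _ ⟨j, hj, rfl⟩; exact ih j hj) (hf i)
      simpa using sub_mem (LinearMap.mem_range_self f (b i)) herr
  rw [← LinearMap.range_eq_top, eq_top_iff, ← c.span_eq, span_le]
  rintro _ ⟨i, rfl⟩
  exact hc i

end Module.Basis

open scoped Pointwise in
lemma MonoidAlgebra.mul_mem_supported {k M : Type*} [Semiring k] [Monoid M] {S T : Set M}
    {x y : MonoidAlgebra k M} (hx : x ∈ supported k k S) (hy : y ∈ supported k k T) :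
    x * y ∈ supported k k (S * T) := by
  classical
  rw [mem_supported] at hx hy ⊢
  exact (Finset.coe_subset.mpr (support_coeff_mul_subset x y)).trans
    (by rw [Finset.coe_mul]; exact Set.mul_subset_mul hx hy)

lemma FreeAlgebra.lift_eq_lift_comp_equivMonoidAlgebraFreeMonoid {R X A : Type*} [CommSemiring R]
    [Semiring A] [Algebra R A] (f : X → A) :
    FreeAlgebra.lift R f = (MonoidAlgebra.lift R A (FreeMonoid X) (FreeMonoid.lift f)).comp
      FreeAlgebra.equivMonoidAlgebraFreeMonoid.toAlgHom :=
  FreeAlgebra.hom_ext (funext fun x => by simp [FreeAlgebra.equivMonoidAlgebraFreeMonoid])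

lemma mem_ground {A : Blocks} {x : ℕ} : x ∈ ground A ↔ ∃ X ∈ A, x ∈ X := by
  simp [ground, Finset.mem_sup]

lemma subset_seg_of_mem {A : Blocks} {n : ℕ} (hA : IsSP A n) {X : Finset ℕ} (hX : X ∈ A) :
    X ⊆ seg n :=
  hA.2.2 ▸ block_subset_ground hX

lemma isSP_zero_iff {A : Blocks} : IsSP A 0 ↔ A = ∅ := by
  refine ⟨fun hA => Finset.eq_empty_of_forall_notMem fun X hX => ?_, ?_⟩
  · obtain ⟨x, hx⟩ := hA.1 X hX
    simpa [seg] using subset_seg_of_mem hA hX hx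
  · rintro rfl
    exact ⟨by simp, by simp, by simp [ground, seg]⟩

lemma IsPartitionOf.subset {A S : Blocks} {X : Finset ℕ} (hA : IsPartitionOf A X) (hS : S ⊆ A) :
    IsPartitionOf S (ground S) :=
  ⟨fun B hB => hA.1 B (hS hB), hA.2.1.subset (Finset.coe_subset.mpr hS), rfl⟩

lemma IsPartitionOf.image {A : Blocks} {X : Finset ℕ} (hA : IsPartitionOf A X) {f : ℕ → ℕ}
    (hf : Set.InjOn f X) : IsPartitionOf (A.image fun B => B.image f) (X.image f) := by
  obtain ⟨hne, hdisj, rfl⟩ := hA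
  refine ⟨?_, ?_, ?_⟩
  · simp only [Finset.mem_image]
    rintro _ ⟨B, hB, rfl⟩
    exact (hne B hB).image f
  · simp only [Finset.coe_image]
    rintro _ ⟨B, hB, rfl⟩ _ ⟨C, hC, rfl⟩ hBC
    have hd := hdisj hB hC (fun h => hBC (h ▸ rfl))
    simp only [id, Finset.disjoint_left, Finset.mem_image] at hd ⊢
    rintro _ ⟨x, hx, rfl⟩ ⟨y, hy, hxy⟩
    have := hf (block_subset_ground hC hy) (block_subset_ground hB hx) hxy
    exact hd hx (this ▸ hy)
  · ext z
    simp only [mem_ground, Finset.mem_image, exists_exists_and_eq_and]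
    exact ⟨fun ⟨B, hB, x, hx, hz⟩ => ⟨x, ⟨B, hB, hx⟩, hz⟩,
      fun ⟨x, ⟨B, hB, hx⟩, hz⟩ => ⟨B, hB, x, hx, hz⟩⟩

lemma stdFun_lt_stdFun {X : Finset ℕ} {x y : ℕ} (hx : x ∈ X) (hxy : x < y) :
    stdFun X x < stdFun X y := by
  have hsub : X.filter (· < x) ⊆ X.filter (· < y) := fun z hz => by
    simp only [Finset.mem_filter] at hz ⊢
    exact ⟨hz.1, hz.2.trans hxy⟩
  have hss : X.filter (· < x) ⊂ X.filter (· < y) :=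
    (Finset.ssubset_iff_of_subset hsub).mpr ⟨x, Finset.mem_filter.mpr ⟨hx, hxy⟩, by simp⟩
  simpa [stdFun] using Finset.card_lt_card hss

lemma stdFun_injOn (X : Finset ℕ) : Set.InjOn (stdFun X) X := by
  intro x hx y hy h
  by_contra hne
  rcases Nat.lt_or_gt_of_ne hne with hlt | hlt
  · exact (stdFun_lt_stdFun hx hlt).ne h
  · exact (stdFun_lt_stdFun hy hlt).ne' h

lemma stdFun_mem_seg {X : Finset ℕ} {x : ℕ} (hx : x ∈ X) : stdFun X x ∈ seg X.card := by
  have hlt : (X.filter (· < x)).card < X.card :=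
    Finset.card_lt_card (Finset.filter_ssubset.mpr ⟨x, hx, lt_irrefl x⟩)
  simp only [stdFun, seg, Finset.mem_Icc]
  omega

lemma image_stdFun (X : Finset ℕ) : X.image (stdFun X) = seg X.card :=
  Finset.eq_of_subset_of_card_le (Finset.image_subset_iff.mpr fun _ => stdFun_mem_seg)
    (by rw [Finset.card_image_of_injOn (stdFun_injOn X)]; simp [seg])

lemma stdFun_seg {n x : ℕ} (hx : x ∈ seg n) : stdFun (seg n) x = x := by
  have hfilter : (seg n).filter (· < x) = Finset.Icc 1 (x - 1) := by
    ext y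
    simp only [seg, Finset.mem_filter, Finset.mem_Icc] at hx ⊢
    omega
  simp only [seg, Finset.mem_Icc] at hx
  rw [stdFun, hfilter, Nat.card_Icc]
  omega

lemma isSP_stdP {A : Blocks} {X : Finset ℕ} (hA : IsPartitionOf A X) : IsSP (stdP A) X.card := by
  have h := hA.image (stdFun_injOn X)
  rw [image_stdFun] at h
  rwa [stdP, hA.2.2]

lemma stdP_eq_self {A : Blocks} {n : ℕ} (hA : IsSP A n) : stdP A = A := by
  rw [stdP, hA.2.2]
  conv_rhs => rw [← Finset.image_id (s := A)]
  refine Finset.image_congr fun B hB => ?_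
  conv_rhs => rw [← Finset.image_id (s := B)]
  exact Finset.image_congr fun x hx => stdFun_seg (subset_seg_of_mem hA hB hx)

def SplitsAt (A : Blocks) (m : ℕ) : Prop :=
  ∀ X ∈ A, X ⊆ seg m ∨ ∀ x ∈ X, m < x

def lowerPart (A : Blocks) (m : ℕ) : Blocks := A.filter (· ⊆ seg m)

def upperPart (A : Blocks) (m : ℕ) : Blocks :=
  (A.filter fun X => ¬ X ⊆ seg m).image fun X => X.image (· - m)

section Splitting

variable {A B C : Blocks} {X : Finset ℕ} {m n x : ℕ}

lemma SplitsAt.subset_seg_iff (hs : SplitsAt A m) (hX : X ∈ A) (hx : x ∈ X) :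
    X ⊆ seg m ↔ x ≤ m :=
  ⟨fun h => (Finset.mem_Icc.mp (h hx)).2,
    fun hle => (hs X hX).resolve_right fun h => (h x hx).not_ge hle⟩

lemma ground_lowerPart (hA : IsSP A n) (hs : SplitsAt A m) (hm : m ≤ n) :
    ground (lowerPart A m) = seg m := by
  ext x
  simp only [mem_ground, lowerPart, Finset.mem_filter, and_assoc]
  refine ⟨fun ⟨X, _, hsub, hx⟩ => hsub hx, fun hx => ?_⟩
  have hxm := Finset.mem_Icc.mp hx
  obtain ⟨X, hX, hxX⟩ := mem_ground.mp (hA.2.2 ▸ Finset.mem_Icc.mpr ⟨hxm.1, hxm.2.trans hm⟩ :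
    x ∈ ground A)
  exact ⟨X, hX, (hs.subset_seg_iff hX hxX).mpr hxm.2, hxX⟩

lemma ground_filter_not_subset_seg (hA : IsSP A n) (hs : SplitsAt A m) :
    ground (A.filter fun X => ¬ X ⊆ seg m) = (seg n).filter (m < ·) := by
  ext x
  simp only [mem_ground, Finset.mem_filter, and_assoc]
  constructor
  · rintro ⟨X, hX, hns, hx⟩
    exact ⟨subset_seg_of_mem hA hX hx, not_le.mp ((hs.subset_seg_iff hX hx).not.mp hns)⟩
  · rintro ⟨hx, hmx⟩
    obtain ⟨X, hX, hxX⟩ := mem_ground.mp (hA.2.2 ▸ hx : x ∈ ground A)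
    exact ⟨X, hX, (hs.subset_seg_iff hX hxX).not.mpr (not_le.mpr hmx), hxX⟩

lemma isSP_lowerPart (hA : IsSP A n) (hs : SplitsAt A m) (hm : m ≤ n) :
    IsSP (lowerPart A m) m := by
  have h := hA.subset (Finset.filter_subset (· ⊆ seg m) A)
  rwa [← lowerPart, ground_lowerPart hA hs hm] at h

lemma isSP_upperPart (hA : IsSP A n) (hs : SplitsAt A m) : IsSP (upperPart A m) (n - m) := by
  have h := hA.subset (Finset.filter_subset (fun X => ¬ X ⊆ seg m) A)
  rw [ground_filter_not_subset_seg hA hs] at h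
  have hinj : Set.InjOn (· - m) ((seg n).filter (m < ·)) := fun x hx y hy hxy => by
    simp only [Finset.coe_filter, Set.mem_ofPred_eq] at hx hy hxy
    omega
  have himage : ((seg n).filter (m < ·)).image (· - m) = seg (n - m) := by
    ext z
    simp only [seg, Finset.mem_image, Finset.mem_filter, Finset.mem_Icc]
    exact ⟨by rintro ⟨x, hx, rfl⟩; omega, fun hz => ⟨z + m, by omega, by omega⟩⟩
  rw [IsSP, ← himage]
  exact h.image hinj

lemma image_sub_shiftP (C : Blocks) (m : ℕ) :
    (shiftP C m).image (fun X => X.image (· - m)) = C := by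
  simp [shiftP, Finset.image_image, Function.comp_def]

lemma shiftP_image_sub {F : Blocks} (hF : ∀ X ∈ F, ∀ x ∈ X, m < x) :
    shiftP (F.image fun X => X.image (· - m)) m = F := by
  rw [shiftP, Finset.image_image]
  refine (Finset.image_congr fun X hX => ?_).trans Finset.image_id
  change (X.image (· - m)).image (· + m) = X
  rw [Finset.image_image]
  exact (Finset.image_congr fun x hx => Nat.sub_add_cancel (hF X hX x hx).le).trans Finset.image_id

lemma concatP_lowerPart_upperPart (hA : IsSP A n) (hs : SplitsAt A m) (hm : m ≤ n) :
    concatP (lowerPart A m) (upperPart A m) = A := by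
  have hshift : shiftP (upperPart A m) m = A.filter fun X => ¬ X ⊆ seg m :=
    shiftP_image_sub fun X hX => (hs X (Finset.mem_filter.mp hX).1).resolve_left
      (Finset.mem_filter.mp hX).2
  rw [concatP, ground_lowerPart hA hs hm, show (seg m).card = m by simp [seg], hshift,
    lowerPart, Finset.filter_union_filter_not_eq]

lemma lt_of_mem_shiftP (hC : IsSP C n) (hX : X ∈ shiftP C m) (hx : x ∈ X) : m < x := by
  obtain ⟨Y, hY, rfl⟩ := Finset.mem_image.mp hX
  obtain ⟨y, hy, rfl⟩ := Finset.mem_image.mp hx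
  have := (Finset.mem_Icc.mp (subset_seg_of_mem hC hY hy)).1
  omega

lemma not_subset_seg_of_mem_shiftP (hC : IsSP C n) (hX : X ∈ shiftP C m) : ¬ X ⊆ seg m := by
  intro hsub
  obtain ⟨Y, hY, rfl⟩ := Finset.mem_image.mp hX
  obtain ⟨x, hx⟩ := (hC.1 Y hY).image (· + m)
  exact (lt_of_mem_shiftP hC hX hx).not_ge (Finset.mem_Icc.mp (hsub hx)).2

lemma concatP_eq_union (hB : IsSP B m) (C : Blocks) : concatP B C = B ∪ shiftP C m := by
  rw [concatP, ground_card_of_isSP hB]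

lemma splitsAt_concatP (hB : IsSP B m) (hC : IsSP C n) : SplitsAt (concatP B C) m := by
  intro X hX
  rcases Finset.mem_union.mp (concatP_eq_union hB C ▸ hX) with h | h
  · exact Or.inl (subset_seg_of_mem hB h)
  · exact Or.inr fun x hx => lt_of_mem_shiftP hC h hx

lemma lowerPart_concatP (hB : IsSP B m) (hC : IsSP C n) : lowerPart (concatP B C) m = B := by
  rw [lowerPart, concatP_eq_union hB, Finset.filter_union,
    Finset.filter_true_of_mem fun X hX => subset_seg_of_mem hB hX,
    Finset.filter_false_of_mem fun X hX => not_subset_seg_of_mem_shiftP hC hX, Finset.union_empty]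

lemma upperPart_concatP (hB : IsSP B m) (hC : IsSP C n) : upperPart (concatP B C) m = C := by
  rw [upperPart, concatP_eq_union hB, Finset.filter_union,
    Finset.filter_false_of_mem fun X hX => not_not.mpr (subset_seg_of_mem hB hX),
    Finset.filter_true_of_mem fun X hX => not_subset_seg_of_mem_shiftP hC hX, Finset.empty_union,
    image_sub_shiftP]

lemma isAtomicSP_iff :
    IsAtomicSP A n ↔ IsSP A n ∧ 1 ≤ n ∧ ∀ m, 0 < m → m < n → ¬ SplitsAt A m := by
  refine ⟨fun ⟨hA, hn, hdec⟩ => ⟨hA, hn, fun m hm hmn hs => hdec ?_⟩,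
    fun ⟨hA, hn, hns⟩ => ⟨hA, hn, ?_⟩⟩
  · exact ⟨m, _, _, hm, hmn, isSP_lowerPart hA hs hmn.le, isSP_upperPart hA hs,
      (concatP_lowerPart_upperPart hA hs hmn.le).symm⟩
  · rintro ⟨m, B, C, hm, hmn, hB, hC, rfl⟩
    exact hns m hm hmn (splitsAt_concatP hB hC)

end Splitting

namespace SP

lemma val_mul (x y : SP) : (x * y).1 = concatP x.1 y.1 := rfl

lemma val_one : (1 : SP).1 = ∅ := rfl

def ofIsSP {A : Blocks} {n : ℕ} (h : IsSP A n) : SP := ⟨A, n, h⟩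

def weight (x : SP) : ℕ := (ground x.1).card

lemma isSP_weight (x : SP) : IsSP x.1 x.weight := by
  obtain ⟨n, hn⟩ := x.2
  rwa [weight, ground_card_of_isSP hn]

lemma weight_eq {x : SP} {n : ℕ} (h : IsSP x.1 n) : x.weight = n := ground_card_of_isSP h

lemma weight_ofIsSP {A : Blocks} {n : ℕ} (h : IsSP A n) : (ofIsSP h).weight = n :=
  weight_eq h

lemma weight_mul (x y : SP) : (x * y).weight = x.weight + y.weight :=
  weight_eq (isSP_concat x.isSP_weight y.isSP_weight)

lemma weight_eq_zero_iff {x : SP} : x.weight = 0 ↔ x = 1 :=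
  ⟨fun h => Subtype.ext (isSP_zero_iff.mp (h ▸ x.isSP_weight)),
    by rintro rfl; simp [weight, val_one, ground]⟩

end SP

namespace AtomicSP

lemma isAtomicSP (a : AtomicSP) : IsAtomicSP a.1.1 a.1.weight := by
  obtain ⟨n, hn⟩ := a.2
  rwa [SP.weight_eq hn.1]

lemma weight_pos (a : AtomicSP) : 0 < a.1.weight := a.isAtomicSP.2.1

lemma weight_le_of_mul_eq {a a' : AtomicSP} {x x' : SP} (h : a.1 * x = a'.1 * x') :
    a'.1.weight ≤ a.1.weight := by
  by_contra! hlt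
  have hs : SplitsAt (concatP a.1.1 x.1) a.1.weight := splitsAt_concatP a.isAtomicSP.1 x.isSP_weight
  rw [← SP.val_mul, h, SP.val_mul] at hs
  exact (isAtomicSP_iff.mp a'.isAtomicSP).2.2 _ a.weight_pos hlt
    fun X hX => hs X (Finset.mem_union_left _ hX)

lemma mul_cancel {a a' : AtomicSP} {x x' : SP} (h : a.1 * x = a'.1 * x') : a = a' ∧ x = x' := by
  have hw : a.1.weight = a'.1.weight :=
    (weight_le_of_mul_eq h.symm).antisymm (weight_le_of_mul_eq h)
  have hA := a.isAtomicSP.1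
  have hA' : IsSP a'.1.1 a.1.weight := hw ▸ a'.isAtomicSP.1
  have hval : concatP a.1.1 x.1 = concatP a'.1.1 x'.1 := congrArg Subtype.val h
  refine ⟨Subtype.ext (Subtype.ext ?_), Subtype.ext ?_⟩
  · rw [← lowerPart_concatP hA x.isSP_weight, hval, lowerPart_concatP hA' x'.isSP_weight]
  · rw [← upperPart_concatP hA x.isSP_weight, hval, upperPart_concatP hA' x'.isSP_weight]

end AtomicSP

namespace SP

noncomputable def ofWord : FreeMonoid AtomicSP →* SP := FreeMonoid.lift fun a => a.1

lemma ofWord_of (a : AtomicSP) : ofWord (.of a) = a.1 := FreeMonoid.lift_eval_of _ _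

lemma ofWord_of_mul (a : AtomicSP) (w : FreeMonoid AtomicSP) :
    ofWord (.of a * w) = a.1 * ofWord w := by
  rw [map_mul, ofWord_of]

lemma length_le_weight_ofWord (w : FreeMonoid AtomicSP) : w.length ≤ (ofWord w).weight := by
  induction w using FreeMonoid.inductionOn' with
  | one => simp
  | of_mul a w ih =>
    rw [ofWord_of_mul, weight_mul, FreeMonoid.length_mul, FreeMonoid.length_of]
    have := a.weight_pos
    omega

lemma ofWord_eq_one_iff {w : FreeMonoid AtomicSP} : ofWord w = 1 ↔ w = 1 := by
  refine ⟨fun h => FreeMonoid.length_eq_zero.mp ?_, fun h => h ▸ map_one ofWord⟩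
  have := length_le_weight_ofWord w
  rw [h, weight_eq_zero_iff.mpr rfl] at this
  omega

lemma ofWord_injective : Function.Injective ofWord := by
  intro w
  induction w using FreeMonoid.inductionOn' with
  | one => exact fun w' h => (ofWord_eq_one_iff.mp (h.symm.trans (map_one ofWord))).symm
  | of_mul a w ih =>
    intro w' h
    cases w' with
    | one =>
      exact absurd (ofWord_eq_one_iff.mp (h.trans (map_one ofWord)))
        (by simp [← FreeMonoid.length_eq_zero])
    | of_mul a' w' =>
      rw [ofWord_of_mul, ofWord_of_mul] at h
      obtain ⟨rfl, hw⟩ := AtomicSP.mul_cancel h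
      rw [ih hw]

lemma ofWord_surjective : Function.Surjective ofWord := by
  intro x
  induction hx : x.weight using Nat.strong_induction_on generalizing x with
  | _ n ih =>
    have hA : IsSP x.1 n := hx ▸ x.isSP_weight
    rcases Nat.eq_zero_or_pos n with rfl | hn
    · exact ⟨1, Subtype.ext (by rw [map_one, val_one, isSP_zero_iff.mp hA])⟩
    by_cases hatom : ∀ m, 0 < m → m < n → ¬ SplitsAt x.1 m
    · exact ⟨.of ⟨x, n, isAtomicSP_iff.mpr ⟨hA, hn, hatom⟩⟩, ofWord_of _⟩
    push Not at hatom
    obtain ⟨m, hm, hmn, hs⟩ := hatom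
    have hL := isSP_lowerPart hA hs hmn.le
    have hU := isSP_upperPart hA hs
    obtain ⟨u, hu⟩ := ih m hmn (ofIsSP hL) (weight_ofIsSP hL)
    obtain ⟨v, hv⟩ := ih (n - m) (by omega) (ofIsSP hU) (weight_ofIsSP hU)
    exact ⟨u * v, Subtype.ext (by
      rw [map_mul, hu, hv]
      exact concatP_lowerPart_upperPart hA hs hmn.le)⟩

noncomputable def factorization : FreeMonoid AtomicSP ≃* SP :=
  MulEquiv.ofBijective ofWord ⟨ofWord_injective, ofWord_surjective⟩

noncomputable def numFactors (x : SP) : ℕ := (factorization.symm x).length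

lemma numFactors_ofWord (w : FreeMonoid AtomicSP) : numFactors (ofWord w) = w.length :=
  congrArg FreeMonoid.length (factorization.symm_apply_apply w)

lemma numFactors_atomic (a : AtomicSP) : numFactors a.1 = 1 := by
  rw [← ofWord_of, numFactors_ofWord, FreeMonoid.length_of]

lemma numFactors_mul (x y : SP) : numFactors (x * y) = numFactors x + numFactors y := by
  rw [numFactors, map_mul, FreeMonoid.length_mul, numFactors, numFactors]

lemma numFactors_le_weight (x : SP) : numFactors x ≤ x.weight := by
  obtain ⟨w, rfl⟩ := ofWord_surjective x
  rw [numFactors_ofWord]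
  exact length_le_weight_ofWord w

lemma one_le_numFactors {x : SP} (hx : x ≠ 1) : 1 ≤ numFactors x := by
  obtain ⟨w, rfl⟩ := ofWord_surjective x
  rw [numFactors_ofWord, Nat.one_le_iff_ne_zero, Ne, FreeMonoid.length_eq_zero]
  exact mt (fun h => h ▸ map_one ofWord) hx

end SP

def blockRank (A : Blocks) (B : Finset ℕ) : ℕ := (A.filter fun C => C.min ≤ B.min).card

section BlockIndexing

variable {A : Blocks} {X : Finset ℕ}

lemma IsPartitionOf.min_injOn (hA : IsPartitionOf A X) :
    Set.InjOn Finset.min (A : Set (Finset ℕ)) := by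
  intro B hB C hC h
  by_contra hne
  obtain ⟨b, hb⟩ := Finset.min_of_nonempty (hA.1 B hB)
  exact Finset.disjoint_left.mp (hA.2.1 hB hC hne) (Finset.mem_of_min hb)
    (Finset.mem_of_min (h ▸ hb))

lemma blockRank_lt_blockRank {B C : Finset ℕ} (hC : C ∈ A) (h : B.min < C.min) :
    blockRank A B < blockRank A C := by
  refine Finset.card_lt_card ((Finset.ssubset_iff_of_subset fun D hD => ?_).mpr
    ⟨C, Finset.mem_filter.mpr ⟨hC, le_rfl⟩, fun hC' => (Finset.mem_filter.mp hC').2.not_gt h⟩)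
  obtain ⟨hD, hDB⟩ := Finset.mem_filter.mp hD
  exact Finset.mem_filter.mpr ⟨hD, hDB.trans h.le⟩

lemma IsPartitionOf.blockRank_injOn (hA : IsPartitionOf A X) :
    Set.InjOn (blockRank A) (A : Set (Finset ℕ)) := by
  intro B hB C hC h
  rcases lt_trichotomy B.min C.min with hlt | heq | hlt
  · exact absurd h (blockRank_lt_blockRank hC hlt).ne
  · exact hA.min_injOn hB hC heq
  · exact absurd h (blockRank_lt_blockRank hB hlt).ne'

lemma blockRank_mem_seg {B : Finset ℕ} (hB : B ∈ A) : blockRank A B ∈ seg A.card :=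
  Finset.mem_Icc.mpr ⟨Finset.card_pos.mpr ⟨B, Finset.mem_filter.mpr ⟨hB, le_rfl⟩⟩,
    Finset.card_le_card (Finset.filter_subset _ _)⟩

lemma IsPartitionOf.image_blockRank (hA : IsPartitionOf A X) : A.image (blockRank A) = seg A.card :=
  Finset.eq_of_subset_of_card_le (Finset.image_subset_iff.mpr fun _ => blockRank_mem_seg)
    (by rw [Finset.card_image_of_injOn hA.blockRank_injOn]; simp [seg])

lemma IsPartitionOf.blockAt_blockRank (hA : IsPartitionOf A X) {B : Finset ℕ} (hB : B ∈ A) :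
    blockAt A (blockRank A B) = B := by
  have : (A.filter fun C => blockRank A C = blockRank A B) = {B} := by
    ext C
    simp only [Finset.mem_filter, Finset.mem_singleton]
    exact ⟨fun ⟨hC, h⟩ => hA.blockRank_injOn hC hB h, by rintro rfl; exact ⟨hB, rfl⟩⟩
  change (A.filter fun C => blockRank A C = blockRank A B).sup id = B
  rw [this, Finset.sup_singleton, id]

lemma IsPartitionOf.blockAt_mem (hA : IsPartitionOf A X) {i : ℕ} (hi : i ∈ seg A.card) :
    blockAt A i ∈ A := by
  obtain ⟨B, hB, rfl⟩ := Finset.mem_image.mp (hA.image_blockRank ▸ hi)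
  rwa [hA.blockAt_blockRank hB]

lemma IsPartitionOf.blockAt_injOn (hA : IsPartitionOf A X) :
    Set.InjOn (blockAt A) (seg A.card : Set ℕ) := by
  intro i hi j hj h
  obtain ⟨B, hB, rfl⟩ := Finset.mem_image.mp (hA.image_blockRank ▸ hi)
  obtain ⟨C, hC, rfl⟩ := Finset.mem_image.mp (hA.image_blockRank ▸ hj)
  rw [hA.blockAt_blockRank hB, hA.blockAt_blockRank hC] at h
  rw [h]

lemma IsPartitionOf.subColl_seg (hA : IsPartitionOf A X) : subColl A (seg A.card) = A := by
  rw [subColl, ← hA.image_blockRank, Finset.image_image]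
  conv_rhs => rw [← Finset.image_id (s := A)]
  exact Finset.image_congr fun B hB => hA.blockAt_blockRank hB

lemma IsPartitionOf.subColl_subset (hA : IsPartitionOf A X) {g : Finset ℕ}
    (hg : g ⊆ seg A.card) : subColl A g ⊆ A :=
  Finset.image_subset_iff.mpr fun _ hi => hA.blockAt_mem (hg hi)

lemma IsPartitionOf.card_ground_subColl (hA : IsPartitionOf A X) {g : Finset ℕ}
    (hg : g ⊆ seg A.card) : (ground (subColl A g)).card = ∑ i ∈ g, (blockAt A i).card := by
  have hpart := hA.subset (hA.subColl_subset hg)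
  rw [ground, Finset.sup_eq_biUnion, Finset.card_biUnion fun B hB C hC => hpart.2.1 hB hC,
    subColl, Finset.sum_image fun i hi j hj => hA.blockAt_injOn (hg hi) (hg hj)]
  rfl

end BlockIndexing

section SetCompositions

variable {γ : SComp} {K : Finset ℕ}

lemma sunion_cons (g : Finset ℕ) (γ : SComp) : sunion (g :: γ) = g ∪ sunion γ := rfl

lemma subset_sunion {g : Finset ℕ} (hg : g ∈ γ) : g ⊆ sunion γ := by
  induction γ with
  | nil => simp at hg
  | cons a l ih =>
    rcases List.mem_cons.mp hg with rfl | h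
    · exact Finset.subset_union_left
    · exact (ih h).trans Finset.subset_union_right

lemma disjoint_sunion {a : Finset ℕ} (h : ∀ b ∈ γ, Disjoint a b) : Disjoint a (sunion γ) := by
  induction γ with
  | nil => simp [sunion]
  | cons b l ih =>
    rw [sunion_cons, Finset.disjoint_union_right]
    exact ⟨h b List.mem_cons_self, ih fun c hc => h c (List.mem_cons_of_mem _ hc)⟩

lemma sum_map_sum_eq_sum_sunion {M : Type*} [AddCommMonoid M] (hdis : γ.Pairwise Disjoint)
    (f : ℕ → M) : (γ.map fun g => ∑ i ∈ g, f i).sum = ∑ i ∈ sunion γ, f i := by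
  induction γ with
  | nil => simp [sunion]
  | cons a l ih =>
    obtain ⟨ha, hl⟩ := List.pairwise_cons.mp hdis
    rw [List.map_cons, List.sum_cons, ih hl, sunion_cons, Finset.sum_union (disjoint_sunion ha)]

lemma IsSCompOf.subset (h : IsSCompOf γ K) {g : Finset ℕ} (hg : g ∈ γ) : g ⊆ K :=
  h.2.2 ▸ subset_sunion hg

lemma IsSCompOf.length_le_card (h : IsSCompOf γ K) : γ.length ≤ K.card := by
  induction γ generalizing K with
  | nil => simp
  | cons a l ih =>
    obtain ⟨hne, hdis, rfl⟩ := h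
    obtain ⟨ha, hl⟩ := List.pairwise_cons.mp hdis
    have := ih ⟨fun g hg => hne g (List.mem_cons_of_mem _ hg), hl, rfl⟩
    rw [List.length_cons, sunion_cons, Finset.card_union_of_disjoint (disjoint_sunion ha)]
    have := (hne a List.mem_cons_self).card_pos
    omega

lemma finite_setOf_isSCompOf (K : Finset ℕ) : {γ : SComp | IsSCompOf γ K}.Finite := by
  refine ((List.finite_length_le K.powerset K.card).image fun l => l.map Subtype.val).subset
    fun γ hγ => ⟨γ.attach.map fun g => ⟨g.1, Finset.mem_powerset.mpr (hγ.subset g.2)⟩, ?_, by simp⟩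
  simpa using hγ.length_le_card

lemma IsSCompOf.two_le_length (h : IsSCompOf γ K) (hK : K.Nonempty) (hne : γ ≠ [K]) :
    2 ≤ γ.length := by
  obtain ⟨-, -, rfl⟩ := h
  match γ, hne, hK with
  | [], _, hK => simp [sunion] at hK
  | [g], hne, _ => simp [sunion] at hne
  | _ :: _ :: _, _, _ => simp

end SetCompositions

section ApplyComp

variable {A : Blocks} {X : Finset ℕ} {γ : SComp}

lemma applyComp_cons (g : Finset ℕ) (γ : SComp) (A : Blocks) :
    applyComp (g :: γ) A = concatP (stdP (subColl A g)) (applyComp γ A) := rfl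

lemma IsPartitionOf.isSP_stdP_subColl (hA : IsPartitionOf A X) {g : Finset ℕ}
    (hg : g ⊆ seg A.card) : IsSP (stdP (subColl A g)) (∑ i ∈ g, (blockAt A i).card) :=
  hA.card_ground_subColl hg ▸ isSP_stdP (hA.subset (hA.subColl_subset hg))

lemma IsPartitionOf.isSP_applyComp (hA : IsPartitionOf A X) (hγ : ∀ g ∈ γ, g ⊆ seg A.card) :
    IsSP (applyComp γ A) (γ.map fun g => ∑ i ∈ g, (blockAt A i).card).sum := by
  induction γ with
  | nil => exact isSP_zero_iff.mpr rfl
  | cons g γ ih =>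
    rw [applyComp_cons, List.map_cons, List.sum_cons]
    exact isSP_concat (hA.isSP_stdP_subColl (hγ g List.mem_cons_self))
      (ih fun g' hg' => hγ g' (List.mem_cons_of_mem _ hg'))

lemma IsSP.isSP_applyComp {n : ℕ} (hA : IsSP A n) (hγ : IsSCompOf γ (seg A.card)) :
    IsSP (applyComp γ A) n := by
  have h := IsPartitionOf.isSP_applyComp hA fun g => hγ.subset
  have hn := hA.card_ground_subColl (subset_refl _)
  rwa [sum_map_sum_eq_sum_sunion hγ.2.1, hγ.2.2, ← hn, hA.subColl_seg,
    ground_card_of_isSP hA] at h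

lemma IsPartitionOf.length_le_numFactors_applyComp (hA : IsPartitionOf A X)
    (hne : ∀ g ∈ γ, g.Nonempty) (hγ : ∀ g ∈ γ, g ⊆ seg A.card) {n : ℕ}
    (h : IsSP (applyComp γ A) n) : γ.length ≤ SP.numFactors (SP.ofIsSP h) := by
  induction γ generalizing n with
  | nil => simp
  | cons g γ ih =>
    have hg := hA.isSP_stdP_subColl (hγ g List.mem_cons_self)
    have hrest := hA.isSP_applyComp fun g' hg' => hγ g' (List.mem_cons_of_mem _ hg')
    have hsplit : SP.ofIsSP h = SP.ofIsSP hg * SP.ofIsSP hrest := rfl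
    have hg_ne_one : SP.ofIsSP hg ≠ 1 := by
      rw [Ne, ← SP.weight_eq_zero_iff, SP.weight_ofIsSP, Finset.sum_eq_zero_iff, not_forall]
      obtain ⟨i, hi⟩ := hne g List.mem_cons_self
      exact ⟨i, fun h0 => (hA.1 _ (hA.blockAt_mem (hγ g List.mem_cons_self hi))).card_pos.ne'
        (h0 hi)⟩
    rw [hsplit, SP.numFactors_mul, List.length_cons]
    have := ih (fun g' hg' => hne g' (List.mem_cons_of_mem _ hg'))
      (fun g' hg' => hγ g' (List.mem_cons_of_mem _ hg')) hrest
    have := SP.one_le_numFactors hg_ne_one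
    omega

end ApplyComp

namespace SP

open MonoidAlgebra

noncomputable def factorFiltration (w k : ℕ) : Submodule ℚ NCSym2 :=
  supported ℚ ℚ {x : SP | x.weight = w ∧ k ≤ numFactors x}

lemma single_mem_factorFiltration (x : SP) :
    single x (1 : ℚ) ∈ factorFiltration x.weight (numFactors x) := by
  rw [factorFiltration, supported_eq_span_single]
  exact Submodule.subset_span ⟨x, ⟨rfl, le_rfl⟩, rfl⟩

lemma factorFiltration_antitone {w k k' : ℕ} (h : k ≤ k') :
    factorFiltration w k' ≤ factorFiltration w k :=
  supported_mono fun _ hx => ⟨hx.1, h.trans hx.2⟩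

lemma mul_mem_factorFiltration {x y : NCSym2} {w₁ w₂ k₁ k₂ : ℕ}
    (hx : x ∈ factorFiltration w₁ k₁) (hy : y ∈ factorFiltration w₂ k₂) :
    x * y ∈ factorFiltration (w₁ + w₂) (k₁ + k₂) := by
  refine supported_mono ?_ (mul_mem_supported hx hy)
  rintro _ ⟨u, ⟨hu, hku⟩, v, ⟨hv, hkv⟩, rfl⟩
  exact ⟨by rw [weight_mul, hu, hv], by rw [numFactors_mul]; omega⟩

end SP

lemma basSP_of_isSP {A : Blocks} {n : ℕ} (h : IsSP A n) :
    basSP A = MonoidAlgebra.single (SP.ofIsSP h) 1 :=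
  dif_pos ⟨n, h⟩

lemma IsSP.applyComp_seg {A : Blocks} {n : ℕ} (hA : IsSP A n) : applyComp [seg A.card] A = A := by
  rw [applyComp_cons, hA.subColl_seg, stdP_eq_self hA]
  simp [applyComp, concatP, shiftP]

lemma IsSP.basSP_applyComp_mem {A : Blocks} {n : ℕ} {γ : SComp} (hA : IsSP A n)
    (hγ : IsSCompOf γ (seg A.card)) : basSP (applyComp γ A) ∈ SP.factorFiltration n γ.length := by
  have h := hA.isSP_applyComp hγ
  rw [basSP_of_isSP h]
  refine SP.factorFiltration_antitone ?_ (SP.weight_ofIsSP h ▸ SP.single_mem_factorFiltration _)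
  exact IsPartitionOf.length_le_numFactors_applyComp hA hγ.1 (fun _ => hγ.subset) h

lemma pSP_sub_single_mem_factorFiltration (a : AtomicSP) :
    pSP a.1 - MonoidAlgebra.single a.1 1 ∈ SP.factorFiltration a.1.weight 2 := by
  have hA := a.isAtomicSP.1
  set r := a.1.1.card
  have h1 : 1 ∈ seg r := by
    obtain ⟨x, hx⟩ := Finset.card_pos.mp (ground_card_of_isSP hA ▸ a.weight_pos)
    obtain ⟨X, hX, -⟩ := mem_ground.mp hx
    exact Finset.mem_Icc.mpr ⟨le_rfl, Finset.card_pos.mpr ⟨X, hX⟩⟩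
  have hΓ : {γ : SComp | IsSCompOf γ (seg r) ∧ 1 ∈ γ.headI}.Finite :=
    (finite_setOf_isSCompOf _).subset fun _ h => h.1
  have hsingle : {[seg r]} ⊆ {γ : SComp | IsSCompOf γ (seg r) ∧ 1 ∈ γ.headI} := by
    rintro _ rfl
    exact ⟨⟨by simpa using ⟨1, h1⟩, by simp, by simp [sunion]⟩, h1⟩
  rw [pSP, ← finsum_mem_add_sdiff hsingle hΓ, finsum_mem_singleton, hA.applyComp_seg,
    basSP_of_isSP hA, List.length_singleton, pow_zero, one_smul, show SP.ofIsSP hA = a.1 from rfl,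
    add_sub_cancel_left]
  refine finsum_mem_induction (· ∈ SP.factorFiltration _ 2) (zero_mem _) (fun _ _ => add_mem)
    fun γ ⟨⟨hγ, _⟩, hne⟩ => Submodule.smul_mem _ _ ?_
  refine SP.factorFiltration_antitone (hγ.two_le_length ⟨1, h1⟩ hne) ?_
  exact hA.basSP_applyComp_mem hγ

lemma lift_pSP_sub_single_mem_factorFiltration (w : FreeMonoid AtomicSP) :
    FreeMonoid.lift (fun a : AtomicSP => pSP a.1) w - MonoidAlgebra.single (SP.ofWord w) 1 ∈
      SP.factorFiltration (SP.ofWord w).weight (w.length + 1) := by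
  induction w using FreeMonoid.inductionOn' with
  | one => simp [← MonoidAlgebra.one_def]
  | of_mul a w ih =>
    set P := pSP a.1
    set s : NCSym2 := MonoidAlgebra.single a.1 1
    set Q := FreeMonoid.lift (fun a : AtomicSP => pSP a.1) w
    set t : NCSym2 := MonoidAlgebra.single (SP.ofWord w) 1
    have hP := pSP_sub_single_mem_factorFiltration a
    have hs : s ∈ SP.factorFiltration a.1.weight 1 :=
      SP.numFactors_atomic a ▸ SP.single_mem_factorFiltration a.1
    have ht : t ∈ SP.factorFiltration (SP.ofWord w).weight w.length := by
      simpa [SP.numFactors_ofWord] using SP.single_mem_factorFiltration (SP.ofWord w)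
    have hPQ : FreeMonoid.lift (fun a : AtomicSP => pSP a.1) (.of a * w) = P * Q :=
      (map_mul _ _ _).trans (congrArg (· * Q) (FreeMonoid.lift_eval_of _ _))
    have hexpand : P * Q - MonoidAlgebra.single (a.1 * SP.ofWord w) 1 =
        s * (Q - t) + (P - s) * t + (P - s) * (Q - t) := by
      rw [← one_mul (1 : ℚ), ← MonoidAlgebra.single_mul_single]
      noncomm_ring
    rw [hPQ, SP.ofWord_of_mul, hexpand, SP.weight_mul,
      FreeMonoid.length_mul, FreeMonoid.length_of]
    refine add_mem (add_mem ?_ ?_) ?_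
    · exact SP.factorFiltration_antitone (by omega) (SP.mul_mem_factorFiltration hs ih)
    · exact SP.factorFiltration_antitone (by omega) (SP.mul_mem_factorFiltration hP ht)
    · exact SP.factorFiltration_antitone (by omega) (SP.mul_mem_factorFiltration hP ih)

lemma lift_pSP_factorization_symm_sub_single_mem (x : SP) :
    FreeMonoid.lift (fun a : AtomicSP => pSP a.1) (SP.factorization.symm x) -
        MonoidAlgebra.single x 1 ∈
      MonoidAlgebra.supported ℚ ℚ
        {y : SP | y.weight - SP.numFactors y < x.weight - SP.numFactors x} := by
  have h := lift_pSP_sub_single_mem_factorFiltration (SP.factorization.symm x)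
  rw [show SP.ofWord (SP.factorization.symm x) = x from SP.factorization.apply_symm_apply x] at h
  refine MonoidAlgebra.supported_mono ?_ h
  rintro y ⟨hw, hk⟩
  change SP.numFactors x + 1 ≤ _ at hk
  have := SP.numFactors_le_weight y
  simp only [Set.mem_ofPred_eq]
  omega

/-- The elements `p(A)`, for `A` atomic, freely generate `NCSym` as an
algebra: the unique `ℚ`-algebra map from the free associative algebra on the atomic set
partitions to `NCSym` sending the generator indexed by `A` to `p(A)` is an algebra
isomorphism, i.e. bijective.  In particular the `p(A)` (`A` atomic) are algebraically
independent. -/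
theorem ncsym_freely_generated_by_pA :
    Function.Bijective
      ((FreeAlgebra.lift ℚ fun A : AtomicSP => pSP A.1 :
        FreeAlgebra ℚ AtomicSP →ₐ[ℚ] NCSym2)) := by
  rw [FreeAlgebra.lift_eq_lift_comp_equivMonoidAlgebraFreeMonoid, AlgHom.coe_comp]
  refine Function.Bijective.comp ?_ (AlgEquiv.bijective _)
  set Φ := MonoidAlgebra.lift ℚ NCSym2 (FreeMonoid AtomicSP) (FreeMonoid.lift fun a => pSP a.1)
  set b := (MonoidAlgebra.basis (FreeMonoid AtomicSP) ℚ).reindex SP.factorization.toEquiv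
  set c := MonoidAlgebra.basis SP ℚ
  have hc : ⇑c = fun y => MonoidAlgebra.single y 1 := funext (MonoidAlgebra.basis_apply ℚ)
  have hf : ∀ x : SP, Φ.toLinearMap (b x) - c x ∈
      Submodule.span ℚ (c '' {y | y.weight - SP.numFactors y < x.weight - SP.numFactors x}) := by
    intro x
    simpa [b, Φ, hc, ← MonoidAlgebra.supported_eq_span_single] using
      lift_pSP_factorization_symm_sub_single_mem x
  exact ⟨b.injective_of_unitriangular c Φ.toLinearMap _ hf,
    b.surjective_of_unitriangular c Φ.toLinearMap _ hf⟩
end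

section
/- Let A and B be Hopf algebras and C a coalgebra over a field k, and let θ : B ⊗ C → A be a surjective k-linear map that is a morphism of coalgebras (where B ⊗ C carries the tensor product coalgebra structure) and measures B to A. Let ι : A → B ⊗ C be any k-linear section of θ, i.e., θ ∘ ι = id_A. Then the antipodes satisfy S_A = θ ∘ (S_B ⊗ id_C) ∘ ι. -/
/-!
In the convolution monoid of linear maps `B ⊗ C → A`, `S_A ∘ θ` is a left inverse of `θ` because
`θ` is a coalgebra map, while `θ ∘ (S_B ⊗ id)` is a right inverse of `θ` because `θ` measures `B`
to `A`: measuring makes `f ↦ θ ∘ (f ⊗ id)` carry convolution on `End B` to convolution on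
`Hom(B ⊗ C, A)`, and `id * S_B = 1` there. Hence the two inverses agree, and precomposing with
the section `ι` gives `S_A = θ ∘ (S_B ⊗ id) ∘ ι`.
-/

open TensorProduct Coalgebra WithConv

section Measuring

variable {k A B C : Type*} [CommSemiring k] [Semiring A] [Algebra k A] [Semiring B] [Algebra k B]
  [AddCommMonoid C] [Module k C] {θ : B ⊗[k] C →ₗ[k] A}

lemma comp_rTensor_convMul [CoalgebraStruct k B] [CoalgebraStruct k C]
    (hθmul : ∀ (b b' : B) (c : C),
      θ ((b * b') ⊗ₜ[k] c) =
        LinearMap.mul' k A ((TensorProduct.map θ θ)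
          (TensorProduct.tensorTensorTensorComm k B B C C
            ((b ⊗ₜ[k] b') ⊗ₜ[k] Coalgebra.comul c))))
    (f g : WithConv (B →ₗ[k] B)) :
    toConv (θ ∘ₗ (f * g).ofConv.rTensor C) =
      toConv (θ ∘ₗ f.ofConv.rTensor C) * toConv (θ ∘ₗ g.ofConv.rTensor C) := by
  refine WithConv.ext (TensorProduct.ext' fun b c => ?_)
  simpa [LinearMap.convMul_def, ← (ℛ k b).eq, ← (ℛ k c).eq, sum_tmul, tmul_sum, hθmul]
    using Finset.sum_comm

lemma comp_rTensor_convOne [Coalgebra k B] [Coalgebra k C]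
    (hθone : ∀ c : C, θ ((1 : B) ⊗ₜ[k] c) = Coalgebra.counit (R := k) c • (1 : A)) :
    toConv (θ ∘ₗ (1 : WithConv (B →ₗ[k] B)).ofConv.rTensor C) = 1 := by
  ext b c
  simp [Algebra.algebraMap_eq_smul_one, ← smul_tmul', hθone, smul_smul, mul_comm]

end Measuring

lemma CoalgHom.antipode_comp_convMul_self {k A D : Type*} [CommSemiring k] [Semiring A]
    [HopfAlgebra k A] [AddCommMonoid D] [Module k D] [Coalgebra k D] (θ : D →ₗc[k] A) :
    toConv (HopfAlgebra.antipode k ∘ₗ θ.toLinearMap) * toConv θ.toLinearMap = 1 := by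
  have h := LinearMap.convMul_comp_coalgHom_distrib (toConv (HopfAlgebra.antipode k))
    (toConv LinearMap.id) θ
  simp only [LinearMap.antipode_mul_id, LinearMap.id_comp] at h
  rw [WithConv.ext_iff, ← h]
  ext x
  simp

theorem covering_transfers_antipode_general
    {k : Type*} [Field k] {A B C : Type*}
    [Semiring A] [HopfAlgebra k A] [Semiring B] [HopfAlgebra k B]
    [AddCommMonoid C] [Module k C] [Coalgebra k C]
    (θ : (B ⊗[k] C) →ₗ[k] A)
    (hθcomul : Coalgebra.comul ∘ₗ θ = (TensorProduct.map θ θ) ∘ₗ Coalgebra.comul)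
    (hθcounit : Coalgebra.counit ∘ₗ θ = (Coalgebra.counit : (B ⊗[k] C) →ₗ[k] k))
    (hθmul : ∀ (b b' : B) (c : C),
      θ ((b * b') ⊗ₜ[k] c) =
        LinearMap.mul' k A ((TensorProduct.map θ θ)
          (TensorProduct.tensorTensorTensorComm k B B C C
            ((b ⊗ₜ[k] b') ⊗ₜ[k] Coalgebra.comul c))))
    (hθone : ∀ c : C, θ ((1 : B) ⊗ₜ[k] c) = Coalgebra.counit (R := k) c • (1 : A))
    (ι : A →ₗ[k] (B ⊗[k] C)) (hι : θ ∘ₗ ι = LinearMap.id) :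
    (HopfAlgebra.antipode k : A →ₗ[k] A)
      = θ ∘ₗ (TensorProduct.map (HopfAlgebra.antipode k : B →ₗ[k] B) LinearMap.id) ∘ₗ ι := by
  let θc : B ⊗[k] C →ₗc[k] A := ⟨θ, hθcounit, hθcomul.symm⟩
  have hright : toConv θ * toConv (θ ∘ₗ (HopfAlgebra.antipode k).rTensor C) = 1 :=
    calc toConv θ * toConv (θ ∘ₗ (HopfAlgebra.antipode k).rTensor C)
        = toConv (θ ∘ₗ (toConv (LinearMap.id : B →ₗ[k] B) *
            toConv (HopfAlgebra.antipode k)).ofConv.rTensor C) := by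
          rw [comp_rTensor_convMul hθmul]; simp
      _ = 1 := by rw [LinearMap.id_mul_antipode, comp_rTensor_convOne hθone]
  have hS : HopfAlgebra.antipode k ∘ₗ θ = θ ∘ₗ (HopfAlgebra.antipode k).rTensor C :=
    congrArg ofConv (left_inv_eq_right_inv (θc.antipode_comp_convMul_self) hright)
  rw [← LinearMap.rTensor_def, ← LinearMap.comp_assoc, ← hS, LinearMap.comp_assoc, hι,
    LinearMap.comp_id]

/-- Let `A`, `B` be Hopf algebras and `C` a coalgebra over a field `k`, and
let `θ : B ⊗ C → A` be a covering: a surjective coalgebra morphism (for the tensor product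
coalgebra structure on `B ⊗ C`) that measures `B` to `A`.  For any linear section `ι` of `θ`
(`θ ∘ ι = id`), the antipodes satisfy `S_A = θ ∘ (S_B ⊗ id) ∘ ι`. -/
theorem covering_transfers_antipode
    {k : Type*} [Field k] {A B C : Type*}
    [Semiring A] [HopfAlgebra k A] [Semiring B] [HopfAlgebra k B]
    [AddCommMonoid C] [Module k C] [Coalgebra k C]
    (θ : (B ⊗[k] C) →ₗ[k] A)
    (hθsurj : Function.Surjective θ)
    (hθcomul : Coalgebra.comul ∘ₗ θ = (TensorProduct.map θ θ) ∘ₗ Coalgebra.comul)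
    (hθcounit : Coalgebra.counit ∘ₗ θ = (Coalgebra.counit : (B ⊗[k] C) →ₗ[k] k))
    (hθmul : ∀ (b b' : B) (c : C),
      θ ((b * b') ⊗ₜ[k] c) =
        LinearMap.mul' k A ((TensorProduct.map θ θ)
          (TensorProduct.tensorTensorTensorComm k B B C C
            ((b ⊗ₜ[k] b') ⊗ₜ[k] Coalgebra.comul c))))
    (hθone : ∀ c : C, θ ((1 : B) ⊗ₜ[k] c) = Coalgebra.counit (R := k) c • (1 : A))
    (ι : A →ₗ[k] (B ⊗[k] C)) (hι : θ ∘ₗ ι = LinearMap.id) :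
    (HopfAlgebra.antipode k : A →ₗ[k] A)
      = θ ∘ₗ (TensorProduct.map (HopfAlgebra.antipode k : B →ₗ[k] B) LinearMap.id) ∘ₗ ι :=
  covering_transfers_antipode_general θ hθcomul hθcounit hθmul hθone ι hι
end
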